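/- Let p > 1. Then lim_{n→∞} n^{−1} ‖T_n‖_{p,1} = 2^{1/p} [(2^p − 1) ζ(p)]^{1/p}. -/

import Mathlib

open Finset Real Filter

/-- The n×n Cauchy–Toeplitz matrix `T_n = [2/(1+2(i-j))]`. -/
noncomputable def cauchyToeplitz (n : ℕ) : Matrix (Fin n) (Fin n) ℝ :=
  fun i j => 2 / (1 + 2 * (((i : ℕ) : ℝ) - ((j : ℕ) : ℝ)))

/-- The ℓ_p norm of `T_n`: `(∑_{i,j} |a_{ij}|^p)^(1/p)`. -/
noncomputable def lpNorm (n : ℕ) (p : ℝ) : ℝ :=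
  (∑ i : Fin n, ∑ j : Fin n, |cauchyToeplitz n i j| ^ p) ^ (1 / p)

/-- The ℓ_{p,q} norm of `T_n`: `(∑_j (∑_i |a_{ij}|^p)^(q/p))^(1/q)`. -/
noncomputable def lpqNorm (n : ℕ) (p q : ℝ) : ℝ :=
  (∑ j : Fin n, (∑ i : Fin n, |cauchyToeplitz n i j| ^ p) ^ (q / p)) ^ (1 / q)

/-- The Riemann zeta function at a real argument (real-valued for real `p > 1`). -/
noncomputable def zetaR (p : ℝ) : ℝ := (riemannZeta p).re

/-!
Column `j` of `T_n` has entries `±2/(2m+1)`, once for each `m < j` and once for each `m < n - j`,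
so with `A k = ∑_{m<k} (2/(2m+1))^p` the column `p`-norms are `(A j + A (n - j))^{1/p}`.
As `A k` increases to `∑_m (2/(2m+1))^p = (2^p - 1) ζ(p)` (the odd part of `ζ(p)`, scaled by `2^p`),
the average column norm tends to `(2 (2^p - 1) ζ(p))^{1/p}`.
-/

open Topology

lemma hasSum_zetaR {p : ℝ} (hp : 1 < p) :
    HasSum (fun n : ℕ => ((n : ℝ) ^ p)⁻¹) (zetaR p) := by
  have hζ : riemannZeta p = ((∑' n : ℕ, ((n : ℝ) ^ p)⁻¹ : ℝ) : ℂ) := by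
    rw [zeta_eq_tsum_one_div_nat_cpow (by simpa using hp), Complex.ofReal_tsum]
    congr 1 with n
    rw [one_div, Complex.ofReal_inv, Complex.ofReal_cpow n.cast_nonneg, Complex.ofReal_natCast]
  rw [zetaR, hζ, Complex.ofReal_re]
  exact (Real.summable_nat_rpow_inv.2 hp).hasSum

lemma hasSum_odd_rpow_inv {p : ℝ} (hp : 1 < p) :
    HasSum (fun k : ℕ => (((2 * k + 1 : ℕ) : ℝ) ^ p)⁻¹) ((1 - (2 ^ p)⁻¹) * zetaR p) := by
  set f : ℕ → ℝ := fun n => ((n : ℝ) ^ p)⁻¹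
  have hζ : HasSum f (zetaR p) := hasSum_zetaR hp
  have heven : HasSum (fun k => f (2 * k)) ((2 ^ p)⁻¹ * zetaR p) := by
    have hf : (fun k => f (2 * k)) = fun k => (2 ^ p)⁻¹ * f k := by
      ext k
      simp only [f, Nat.cast_mul, Nat.cast_ofNat, mul_rpow zero_le_two (Nat.cast_nonneg k), mul_inv]
    exact hf ▸ hζ.mul_left _
  have hodd : Summable fun k => f (2 * k + 1) :=
    hζ.summable.comp_injective fun a b h => by omega
  have htotal := (heven.even_add_odd hodd.hasSum).unique hζ
  convert hodd.hasSum using 1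
  linear_combination -htotal

noncomputable def oddTerm (p : ℝ) (m : ℕ) : ℝ := (2 / (2 * m + 1)) ^ p

noncomputable def oddPowSum (p : ℝ) (k : ℕ) : ℝ := ∑ m ∈ range k, oddTerm p m

lemma oddTerm_nonneg (p : ℝ) (m : ℕ) : 0 ≤ oddTerm p m := by
  unfold oddTerm; positivity

lemma oddPowSum_nonneg (p : ℝ) (k : ℕ) : 0 ≤ oddPowSum p k :=
  sum_nonneg fun m _ => oddTerm_nonneg p m

lemma oddPowSum_mono (p : ℝ) : Monotone (oddPowSum p) := fun _ _ hkl =>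
  sum_le_sum_of_subset_of_nonneg (range_subset_range.2 hkl) fun m _ _ => oddTerm_nonneg p m

lemma hasSum_oddTerm {p : ℝ} (hp : 1 < p) : HasSum (oddTerm p) ((2 ^ p - 1) * zetaR p) := by
  have h2p : (2 : ℝ) ^ p ≠ 0 := (rpow_pos_of_pos two_pos p).ne'
  have hterm : oddTerm p = fun m => 2 ^ p * (((2 * m + 1 : ℕ) : ℝ) ^ p)⁻¹ := by
    ext m
    rw [oddTerm, div_rpow zero_le_two (by positivity), div_eq_mul_inv]
    push_cast
    rfl
  rw [hterm, show (2 ^ p - 1) * zetaR p = 2 ^ p * ((1 - (2 ^ p)⁻¹) * zetaR p) by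
    rw [← mul_assoc, mul_sub, mul_one, mul_inv_cancel₀ h2p]]
  exact (hasSum_odd_rpow_inv hp).mul_left _

lemma abs_two_div_rpow_eq_oddTerm (p : ℝ) (m : ℕ) : |2 / (2 * (m : ℝ) + 1)| ^ p = oddTerm p m := by
  rw [abs_of_pos (by positivity), oddTerm]

/-- The `p`-th power sum of column `j` of `T_n`: the entries above the diagonal contribute
`oddPowSum p j`, those on and below it `oddPowSum p (n - j)`. -/
lemma sum_abs_cauchyToeplitz_rpow (p : ℝ) {n j : ℕ} (hj : j ≤ n) :
    ∑ i ∈ range n, |2 / (1 + 2 * ((i : ℝ) - j))| ^ p = oddPowSum p j + oddPowSum p (n - j) := by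
  rw [range_eq_Ico, ← sum_Ico_consecutive _ j.zero_le hj, ← range_eq_Ico, sum_Ico_eq_sum_range,
    oddPowSum, oddPowSum, ← sum_range_reflect (oddTerm p) j]
  congr 1
  · refine sum_congr rfl fun i hi => ?_
    obtain ⟨k, rfl⟩ : ∃ k, j = i + k + 1 := ⟨j - i - 1, by grind⟩
    rw [show i + k + 1 - 1 - i = k by omega, ← abs_two_div_rpow_eq_oddTerm, ← abs_neg (2 / _),
      ← div_neg]
    push_cast
    ring_nf
  · refine sum_congr rfl fun m _ => ?_
    rw [← abs_two_div_rpow_eq_oddTerm]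
    push_cast
    ring_nf

lemma lpqNorm_one_eq (n : ℕ) (p : ℝ) :
    lpqNorm n p 1 = ∑ j ∈ range n, (oddPowSum p j + oddPowSum p (n - j)) ^ (1 / p) := by
  rw [lpqNorm, div_one, rpow_one,
    ← Fin.sum_univ_eq_sum_range (fun j => (oddPowSum p j + oddPowSum p (n - j)) ^ (1 / p))]
  refine sum_congr rfl fun j _ => ?_
  rw [← sum_abs_cauchyToeplitz_rpow p j.is_le',
    ← Fin.sum_univ_eq_sum_range (fun i => |2 / (1 + 2 * ((i : ℝ) - j))| ^ p)]
  rfl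

/-- Concavity of `x ↦ x ^ r` at the midpoint of `x` and `y`. -/
lemma two_rpow_sub_one_mul_add_rpow_le {r x y : ℝ} (hr₀ : 0 ≤ r) (hr₁ : r ≤ 1)
    (hx : 0 ≤ x) (hy : 0 ≤ y) : 2 ^ (r - 1) * (x ^ r + y ^ r) ≤ (x + y) ^ r := by
  have hmid := (concaveOn_rpow hr₀ hr₁).2 (Set.mem_Ici.2 hx) (Set.mem_Ici.2 hy)
    (by norm_num : (0 : ℝ) ≤ 1 / 2) (by norm_num : (0 : ℝ) ≤ 1 / 2) (by norm_num)
  simp only [smul_eq_mul, ← mul_add] at hmid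
  rw [mul_rpow (by norm_num) (by positivity), one_div, inv_rpow zero_le_two] at hmid
  rw [rpow_sub_one two_ne_zero]
  have h2r : (0 : ℝ) < 2 ^ r := rpow_pos_of_pos two_pos r
  calc 2 ^ r / 2 * (x ^ r + y ^ r) = 2 ^ r * (2⁻¹ * (x ^ r + y ^ r)) := by ring
    _ ≤ 2 ^ r * ((2 ^ r)⁻¹ * (x + y) ^ r) := by gcongr
    _ = (x + y) ^ r := by field_simp

/-- Each term is at most `(2U) ^ r`; by concavity and the reflection `j ↦ n - 1 - j`, the sum is
at least `2 ^ r` times the `n`-th partial sum of `A j ^ r`, whose Cesàro means tend to `U ^ r`. -/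
theorem tendsto_cesaro_rpow_add_reflect {A : ℕ → ℝ} {U r : ℝ} (hmono : Monotone A)
    (hnonneg : ∀ k, 0 ≤ A k) (hlim : Tendsto A atTop (𝓝 U)) (hr₀ : 0 ≤ r) (hr₁ : r ≤ 1) :
    Tendsto (fun n : ℕ => (n : ℝ)⁻¹ * ∑ j ∈ range n, (A j + A (n - j)) ^ r) atTop
      (𝓝 (2 ^ r * U ^ r)) := by
  have hAU : ∀ k, A k ≤ U := hmono.ge_of_tendsto hlim
  have hU : 0 ≤ U := (hnonneg 0).trans (hAU 0)
  have hlower : Tendsto (fun n : ℕ => 2 ^ r * ((n : ℝ)⁻¹ * ∑ j ∈ range n, A j ^ r)) atTop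
      (𝓝 (2 ^ r * U ^ r)) :=
    ((hlim.rpow_const (Or.inr hr₀)).cesaro).const_mul _
  refine tendsto_of_tendsto_of_tendsto_of_le_of_le hlower tendsto_const_nhds (fun n => ?_)
    (fun n => ?_)
  · have hsum : 2 ^ r * ∑ j ∈ range n, A j ^ r ≤ ∑ j ∈ range n, (A j + A (n - j)) ^ r :=
      calc 2 ^ r * ∑ j ∈ range n, A j ^ r
          = ∑ j ∈ range n, 2 ^ (r - 1) * (A j ^ r + A (n - 1 - j) ^ r) := by
            rw [← mul_sum, sum_add_distrib, sum_range_reflect (fun j => A j ^ r) n,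
              ← two_mul, ← mul_assoc, ← rpow_add_one two_ne_zero, sub_add_cancel]
        _ ≤ ∑ j ∈ range n, 2 ^ (r - 1) * (A j ^ r + A (n - j) ^ r) := by
            gcongr with j
            · exact hnonneg _
            · exact hmono (by omega)
        _ ≤ ∑ j ∈ range n, (A j + A (n - j)) ^ r := by
            gcongr with j
            exact two_rpow_sub_one_mul_add_rpow_le hr₀ hr₁ (hnonneg _) (hnonneg _)
    rw [mul_left_comm]
    exact mul_le_mul_of_nonneg_left hsum (by positivity)
  · have hterm : ∀ j ∈ range n, (A j + A (n - j)) ^ r ≤ 2 ^ r * U ^ r := fun j _ => by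
      rw [← mul_rpow zero_le_two hU, two_mul]
      gcongr
      exacts [add_nonneg (hnonneg _) (hnonneg _), hAU _, hAU _]
    calc (n : ℝ)⁻¹ * ∑ j ∈ range n, (A j + A (n - j)) ^ r
        ≤ (n : ℝ)⁻¹ * (n * (2 ^ r * U ^ r)) := by
          gcongr
          simpa using sum_le_card_nsmul _ _ _ hterm
      _ ≤ 2 ^ r * U ^ r := by
          rcases n.eq_zero_or_pos with rfl | hn
          · simp only [CharP.cast_eq_zero, inv_zero, zero_mul]; positivity
          · rw [inv_mul_cancel_left₀ (by positivity)]

theorem stmt_8 (p : ℝ) (hp : 1 < p) :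
    Tendsto (fun n : ℕ => (n : ℝ)⁻¹ * lpqNorm n p 1) atTop
      (nhds (2 ^ (1 / p) * ((2 ^ p - 1) * zetaR p) ^ (1 / p))) := by
  simp_rw [lpqNorm_one_eq]
  exact tendsto_cesaro_rpow_add_reflect (oddPowSum_mono p) (oddPowSum_nonneg p)
    (hasSum_oddTerm hp).tendsto_sum_nat (by positivity) ((div_le_one (by positivity)).2 hp.le)
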